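/- Conditional expectation of a Haar function onto the σ-algebra of a faithful system: let (b_J)_{J∈𝒟_{≤n}} be a finite faithful Haar system with Haar supports 𝓑_J and signs θ_K, and let ℱ = σ({b_J : J ∈ 𝒟_{≤n}}). If K ∈ 𝓑_{J₀} for some J₀ ∈ 𝒟_{≤n}, then 𝔼^ℱ h_K = θ_K (|K|/|J₀|) b_{J₀}; and if K is a dyadic interval not belonging to any 𝓑_J, but K is in the σ-algebra generated by the same levels, then 𝔼^ℱ h_K = 0 provided ⟨χ_{Γ_I}, h_K⟩ = 0 for all atoms Γ_I of ℱ. -/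

import Mathlib

/-!
The atoms `Γ_I`, `I ∈ 𝒟_{n+1}`, partition `[0,1)` and every `b_J` is constant on each of them,
so every set of `ℱ` is a union of atoms and `𝔼^ℱ f` is pinned down by the integrals of `f` over
the atoms; this gives the second claim at once. For `K ∈ 𝓑_{J₀}` we have `h_K = θ_K 1_K b_{J₀}`.
On an atom outside `Γ_{J₀} = ∪𝓑_{J₀}` both sides vanish; on an atom `Γ_I ⊆ Γ_{J₀}` the function
`b_{J₀}` is a constant sign, and it remains to see `|Γ_I ∩ K| = (|K|/|J₀|) |Γ_I|`. By
faithfulness, the step from `Γ_J = ∪𝓑_J` to `Γ_{J^±} = [b_J = ±1]` keeps exactly half of every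
`L ∈ 𝓑_J`. Below `J₀` no such `L` strictly contains `K` (it would put `K` inside `Γ_J`, which by
induction holds only a fraction of `K`), so every generation halves `|Γ ∩ K|`.
-/

open MeasureTheory

/-- The dyadic interval `[i / 2 ^ n, (i + 1) / 2 ^ n) ⊆ [0,1)`. -/
noncomputable def dyadicI (n i : ℕ) : Set ℝ :=
  Set.Ico ((i : ℝ) / 2 ^ n) ((i + 1 : ℝ) / 2 ^ n)

/-- The Haar function `h_I = χ_{I⁺} - χ_{I⁻}` for `I = [i / 2 ^ n, (i + 1) / 2 ^ n)`. -/
noncomputable def haarF (n i : ℕ) : ℝ → ℝ := fun t =>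
  (Set.Ico ((2 * i : ℝ) / 2 ^ (n + 1)) ((2 * i + 1 : ℝ) / 2 ^ (n + 1))).indicator
      (fun _ => (1 : ℝ)) t -
    (Set.Ico ((2 * i + 1 : ℝ) / 2 ^ (n + 1)) ((2 * i + 2 : ℝ) / 2 ^ (n + 1))).indicator
      (fun _ => (1 : ℝ)) t

/-- The iterated level sets `Γ_I` of a system `(b_J)`: `Γ_{[0,1)} = [0,1)` and
`Γ_{I^±} = Γ_I ∩ [b_I = ±1]`. -/
def levelSet (b : ℕ → ℕ → ℝ → ℝ) : ℕ → ℕ → Set ℝ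
  | 0, _ => Set.Ico (0 : ℝ) 1
  | j + 1, i =>
      levelSet b j (i / 2) ∩ {t | b j (i / 2) t = if i % 2 = 0 then 1 else -1}

lemma mem_dyadicI_iff {n i : ℕ} {t : ℝ} : t ∈ dyadicI n i ↔ 0 ≤ t ∧ ⌊t * 2 ^ n⌋₊ = i := by
  have h2n : (0 : ℝ) < 2 ^ n := by positivity
  simp only [dyadicI, Set.mem_Ico, div_le_iff₀ h2n, lt_div_iff₀ h2n]
  constructor
  · rintro ⟨hle, hlt⟩
    have ht : 0 ≤ t := nonneg_of_mul_nonneg_left (le_trans (Nat.cast_nonneg i) hle) h2n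
    exact ⟨ht, (Nat.floor_eq_iff (by positivity)).2 ⟨hle, hlt⟩⟩
  · rintro ⟨ht, rfl⟩
    exact (Nat.floor_eq_iff (by positivity)).1 rfl

lemma floor_mul_two_pow_add_div {t : ℝ} (a k : ℕ) :
    ⌊t * 2 ^ (a + k)⌋₊ / 2 ^ k = ⌊t * 2 ^ a⌋₊ := by
  rw [← Nat.floor_div_natCast, pow_add, Nat.cast_pow, Nat.cast_ofNat, ← mul_assoc,
    mul_div_cancel_right₀ _ (by positivity)]

lemma dyadicI_subset_dyadicI_div (a k d : ℕ) : dyadicI (a + k) d ⊆ dyadicI a (d / 2 ^ k) := by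
  intro t ht
  rw [mem_dyadicI_iff] at ht ⊢
  exact ⟨ht.1, by rw [← ht.2, floor_mul_two_pow_add_div]⟩

lemma dyadicI_subset_of_not_disjoint {a b c d : ℕ} (hac : a ≤ c)
    (h : ¬Disjoint (dyadicI a b) (dyadicI c d)) : dyadicI c d ⊆ dyadicI a b := by
  obtain ⟨k, rfl⟩ := Nat.exists_eq_add_of_le hac
  obtain ⟨t, htb, htd⟩ := Set.not_disjoint_iff.1 h
  rw [mem_dyadicI_iff] at htb htd
  have hb : d / 2 ^ k = b := by rw [← htb.2, ← htd.2, floor_mul_two_pow_add_div]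
  exact hb ▸ dyadicI_subset_dyadicI_div a k d

lemma dyadicI_subset_or_subset_of_not_disjoint {a b c d : ℕ}
    (h : ¬Disjoint (dyadicI a b) (dyadicI c d)) :
    dyadicI a b ⊆ dyadicI c d ∨ dyadicI c d ⊆ dyadicI a b := by
  rcases le_total a c with hac | hca
  · exact Or.inr (dyadicI_subset_of_not_disjoint hac h)
  · exact Or.inl (dyadicI_subset_of_not_disjoint hca (fun h' => h h'.symm))

lemma dyadicI_two_mul_union (n i : ℕ) :
    dyadicI (n + 1) (2 * i) ∪ dyadicI (n + 1) (2 * i + 1) = dyadicI n i := by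
  ext t
  have hfloor := floor_mul_two_pow_add_div (t := t) n 1
  simp only [Set.mem_union, mem_dyadicI_iff, pow_one, ← and_or_left, ← hfloor]
  exact and_congr_right fun _ => by omega

lemma disjoint_dyadicI_two_mul (n i : ℕ) :
    Disjoint (dyadicI (n + 1) (2 * i)) (dyadicI (n + 1) (2 * i + 1)) := by
  refine Set.disjoint_left.2 fun t h h' => ?_
  rw [mem_dyadicI_iff] at h h'
  omega

lemma measurableSet_dyadicI (n i : ℕ) : MeasurableSet (dyadicI n i) := measurableSet_Ico

lemma volume_dyadicI (n i : ℕ) : volume (dyadicI n i) = 2⁻¹ ^ n := by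
  rw [dyadicI, Real.volume_Ico, ← sub_div, add_sub_cancel_left, one_div, ← inv_pow,
    ENNReal.ofReal_pow (by norm_num), ENNReal.ofReal_inv_of_pos two_pos, ENNReal.ofReal_ofNat]

lemma haarF_eq_indicator_sub (n i : ℕ) :
    haarF n i =
      (dyadicI (n + 1) (2 * i)).indicator 1 - (dyadicI (n + 1) (2 * i + 1)).indicator 1 := by
  ext t
  simp only [haarF, dyadicI, Pi.sub_apply, Pi.one_def]
  push_cast
  ring_nf

lemma haarF_eq_zero_of_notMem {n i : ℕ} {t : ℝ} (ht : t ∉ dyadicI n i) : haarF n i t = 0 := by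
  rw [← dyadicI_two_mul_union, Set.mem_union, not_or] at ht
  simp [haarF_eq_indicator_sub, ht.1, ht.2]

lemma haarF_eq_one_iff {n i : ℕ} {t : ℝ} : haarF n i t = 1 ↔ t ∈ dyadicI (n + 1) (2 * i) := by
  have hdisj := (disjoint_dyadicI_two_mul n i).notMem_of_mem_left (a := t)
  by_cases h : t ∈ dyadicI (n + 1) (2 * i) <;> by_cases h' : t ∈ dyadicI (n + 1) (2 * i + 1) <;>
    norm_num [haarF_eq_indicator_sub, *]

lemma haarF_eq_neg_one_iff {n i : ℕ} {t : ℝ} :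
    haarF n i t = -1 ↔ t ∈ dyadicI (n + 1) (2 * i + 1) := by
  have hdisj := (disjoint_dyadicI_two_mul n i).notMem_of_mem_left (a := t)
  by_cases h : t ∈ dyadicI (n + 1) (2 * i) <;> by_cases h' : t ∈ dyadicI (n + 1) (2 * i + 1) <;>
    norm_num [haarF_eq_indicator_sub, *]

lemma haarF_eq_one_or_neg_one_of_mem {n i : ℕ} {t : ℝ} (ht : t ∈ dyadicI n i) :
    haarF n i t = 1 ∨ haarF n i t = -1 := by
  rwa [haarF_eq_one_iff, haarF_eq_neg_one_iff, ← Set.mem_union, dyadicI_two_mul_union]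

lemma volume_setOf_haarF_eq {n i : ℕ} {s : ℝ} (hs : s = 1 ∨ s = -1) :
    volume {t | haarF n i t = s} = 2⁻¹ * volume (dyadicI n i) := by
  rw [volume_dyadicI, ← pow_succ']
  rcases hs with rfl | rfl
  · simp only [haarF_eq_one_iff, Set.ofPred_mem_eq, volume_dyadicI]
  · simp only [haarF_eq_neg_one_iff, Set.ofPred_mem_eq, volume_dyadicI]

lemma measurable_haarF (n i : ℕ) : Measurable (haarF n i) := by
  rw [haarF_eq_indicator_sub]
  exact (measurable_one.indicator (measurableSet_dyadicI _ _)).sub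
    (measurable_one.indicator (measurableSet_dyadicI _ _))

lemma integrable_haarF (n i : ℕ) : Integrable (haarF n i) := by
  rw [haarF_eq_indicator_sub]
  have hfin : ∀ n i, volume (dyadicI n i) ≠ ⊤ := fun n i => by
    rw [volume_dyadicI]; exact ENNReal.pow_ne_top (by norm_num)
  exact (integrableOn_const (hfin _ _)).integrable_indicator (measurableSet_dyadicI _ _) |>.sub
    ((integrableOn_const (hfin _ _)).integrable_indicator (measurableSet_dyadicI _ _))

abbrev saturatedMeasurableSpace {α ι : Type*} (A : ι → Set α) : MeasurableSpace α where
  MeasurableSet' s := ∀ i, A i ⊆ s ∨ Disjoint (A i) s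
  measurableSet_empty i := Or.inr (Set.disjoint_empty _)
  measurableSet_compl s hs i := (hs i).symm.imp Set.subset_compl_iff_disjoint_right.2
    Set.disjoint_compl_right_iff_subset.2
  measurableSet_iUnion f hf i := by
    by_cases h : ∃ k, A i ⊆ f k
    · obtain ⟨k, hk⟩ := h
      exact Or.inl (hk.trans (Set.subset_iUnion f k))
    · simp only [not_exists] at h
      exact Or.inr (Set.disjoint_iUnion_right.2 fun k => (hf k i).resolve_left (h k))

lemma comap_le_saturatedMeasurableSpace {α β ι : Type*} [MeasurableSpace β] {A : ι → Set α}
    {f : α → β} (hf : ∀ i, ∃ v, ∀ x ∈ A i, f x = v) :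
    MeasurableSpace.comap f ‹_› ≤ saturatedMeasurableSpace A := by
  rintro _ ⟨B, -, rfl⟩ i
  obtain ⟨v, hv⟩ := hf i
  by_cases hvB : v ∈ B
  · exact Or.inl fun x hx => by simpa [Set.mem_preimage, hv x hx] using hvB
  · exact Or.inr (Set.disjoint_left.2 fun x hx hxB => hvB (hv x hx ▸ hxB))

section Atoms

open Function

variable {α ι : Type*} [Fintype ι] {m m₀ : MeasurableSpace α} {μ : Measure α} {A : ι → Set α}

lemma setIntegral_eq_sum_setIntegral_inter (hA : ∀ i, MeasurableSet (A i))
    (hAd : Pairwise (Disjoint on A)) (hAμ : ∀ᵐ x ∂μ, ∃ i, x ∈ A i) {s : Set α}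
    (hs : MeasurableSet s) {f : α → ℝ} (hf : Integrable f μ) :
    ∫ x in s, f x ∂μ = ∑ i, ∫ x in A i ∩ s, f x ∂μ := by
  have hs_ae : s =ᵐ[μ] ⋃ i, A i ∩ s := by
    refine Filter.Eventually.set_eq ?_
    filter_upwards [hAμ] with x ⟨i, hi⟩
    simp only [Set.mem_iUnion, Set.mem_inter_iff]
    exact ⟨fun hx => ⟨i, hi, hx⟩, fun ⟨_, _, hx⟩ => hx⟩
  rw [setIntegral_congr_set hs_ae, integral_iUnion_fintype (fun i => (hA i).inter hs)
    (fun i j hij => (hAd hij).mono Set.inter_subset_left Set.inter_subset_left)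
    fun i => hf.integrableOn]

lemma ae_eq_condExp_of_forall_setIntegral_atom_eq [IsFiniteMeasure μ] (hm : m ≤ m₀)
    (hmA : m ≤ saturatedMeasurableSpace A) (hA : ∀ i, MeasurableSet (A i))
    (hAd : Pairwise (Disjoint on A)) (hAμ : ∀ᵐ x ∂μ, ∃ i, x ∈ A i) {f g : α → ℝ}
    (hf : Integrable f μ) (hg : Integrable g μ) (hgm : StronglyMeasurable[m] g)
    (hfg : ∀ i, ∫ x in A i, g x ∂μ = ∫ x in A i, f x ∂μ) :
    g =ᵐ[μ] μ[f | m] := by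
  refine ae_eq_condExp_of_forall_setIntegral_eq hm hf (fun _ _ _ => hg.integrableOn)
    (fun s hs _ => ?_) hgm.aestronglyMeasurable
  rw [setIntegral_eq_sum_setIntegral_inter hA hAd hAμ (hm s hs) hf,
    setIntegral_eq_sum_setIntegral_inter hA hAd hAμ (hm s hs) hg]
  refine Finset.sum_congr rfl fun i _ => ?_
  rcases hmA s hs i with hsub | hdisj
  · rw [Set.inter_eq_left.2 hsub, hfg i]
  · rw [hdisj.inter_eq, setIntegral_empty, setIntegral_empty]

end Atoms

def childSign (c : ℕ) : ℝ := if c % 2 = 0 then 1 else -1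

lemma childSign_eq_one_or_neg_one (c : ℕ) : childSign c = 1 ∨ childSign c = -1 := by
  unfold childSign; split_ifs <;> simp

section LevelSet

variable (b : ℕ → ℕ → ℝ → ℝ)

lemma levelSet_succ (j c : ℕ) :
    levelSet b (j + 1) c = levelSet b j (c / 2) ∩ {t | b j (c / 2) t = childSign c} := rfl

lemma levelSet_add_subset (j k c : ℕ) : levelSet b (j + k) c ⊆ levelSet b j (c / 2 ^ k) := by
  induction k generalizing c with
  | zero => simp
  | succ k ih =>
    rw [← add_assoc, levelSet_succ, pow_succ', ← Nat.div_div_eq_div_mul]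
    exact Set.inter_subset_left.trans (ih _)

lemma levelSet_subset_Ico (j c : ℕ) : levelSet b j c ⊆ Set.Ico 0 1 := by
  have h := levelSet_add_subset b 0 j c
  rwa [zero_add] at h

lemma levelSet_add_succ_subset (j k c : ℕ) :
    levelSet b (j + k + 1) c ⊆ {t | b j (c / 2 ^ (k + 1)) t = childSign (c / 2 ^ k)} := by
  rw [add_right_comm, pow_succ, ← Nat.div_div_eq_div_mul]
  exact (levelSet_add_subset b (j + 1) k c).trans Set.inter_subset_right

lemma disjoint_levelSet {j c c' : ℕ} (hc : c < 2 ^ j) (hc' : c' < 2 ^ j) (hne : c ≠ c') :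
    Disjoint (levelSet b j c) (levelSet b j c') := by
  induction j generalizing c c' with
  | zero => omega
  | succ j ih =>
    rw [levelSet_succ, levelSet_succ]
    by_cases hq : c / 2 = c' / 2
    · refine Disjoint.mono Set.inter_subset_right Set.inter_subset_right ?_
      refine Set.disjoint_left.2 fun t ht ht' => ?_
      simp only [Set.mem_ofPred_eq, hq] at ht ht'
      rw [ht] at ht'
      unfold childSign at ht'
      split_ifs at ht' <;> first | omega | norm_num at ht'
    · exact (ih (by omega) (by omega) hq).mono Set.inter_subset_left Set.inter_subset_left

end LevelSet

abbrev haarSystemSigma (b : ℕ → ℕ → ℝ → ℝ) (n : ℕ) : MeasurableSpace ℝ :=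
  ⨆ j ∈ Finset.range (n + 1), ⨆ i ∈ Finset.range (2 ^ j),
    MeasurableSpace.comap (b j i) Real.measurableSpace

section HaarSystemSigma

variable {n : ℕ} {b : ℕ → ℕ → ℝ → ℝ}

lemma haarSystemSigma_le {m : MeasurableSpace ℝ}
    (h : ∀ j ≤ n, ∀ i < 2 ^ j, MeasurableSpace.comap (b j i) Real.measurableSpace ≤ m) :
    haarSystemSigma b n ≤ m :=
  iSup₂_le fun j hj => iSup₂_le fun i hi =>
    h j (Nat.lt_succ_iff.1 (Finset.mem_range.1 hj)) i (Finset.mem_range.1 hi)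

lemma measurable_b_haarSystemSigma {j i : ℕ} (hj : j ≤ n) (hi : i < 2 ^ j) :
    Measurable[haarSystemSigma b n] (b j i) :=
  measurable_iff_comap_le.2 <| le_iSup₂_of_le j (Finset.mem_range.2 (Nat.lt_succ_of_le hj)) <|
    le_iSup₂_of_le (f := fun i (_ : i ∈ Finset.range (2 ^ j)) =>
      MeasurableSpace.comap (b j i) Real.measurableSpace) i (Finset.mem_range.2 hi) le_rfl

end HaarSystemSigma

def haarSupport (𝓑 : ℕ → ℕ → Finset (ℕ × ℕ)) (j i : ℕ) : Set ℝ := ⋃ p ∈ 𝓑 j i, dyadicI p.1 p.2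

structure FaithfulHaarSystem (n : ℕ) (𝓑 : ℕ → ℕ → Finset (ℕ × ℕ)) (θ : ℕ × ℕ → ℝ)
    (b : ℕ → ℕ → ℝ → ℝ) : Prop where
  sign_eq : ∀ p, θ p = 1 ∨ θ p = -1
  disjoint_of_ne : ∀ j ≤ n, ∀ i < 2 ^ j, ∀ p ∈ 𝓑 j i, ∀ q ∈ 𝓑 j i, p ≠ q →
    Disjoint (dyadicI p.1 p.2) (dyadicI q.1 q.2)
  eq_sum : ∀ j ≤ n, ∀ i < 2 ^ j, b j i = fun t => ∑ p ∈ 𝓑 j i, θ p * haarF p.1 p.2 t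
  haarSupport_zero : haarSupport 𝓑 0 0 = Set.Ico 0 1
  haarSupport_succ : ∀ j < n, ∀ i < 2 ^ j,
    haarSupport 𝓑 (j + 1) (2 * i) = {t | b j i t = 1} ∧
      haarSupport 𝓑 (j + 1) (2 * i + 1) = {t | b j i t = -1}

namespace FaithfulHaarSystem

variable {n : ℕ} {𝓑 : ℕ → ℕ → Finset (ℕ × ℕ)} {θ : ℕ × ℕ → ℝ} {b : ℕ → ℕ → ℝ → ℝ}
  {j i : ℕ} {t : ℝ}

lemma sign_mul_self (H : FaithfulHaarSystem n 𝓑 θ b) (p : ℕ × ℕ) : θ p * θ p = 1 := by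
  rcases H.sign_eq p with h | h <;> simp [h]

lemma b_eq_zero_of_notMem (H : FaithfulHaarSystem n 𝓑 θ b) (hj : j ≤ n) (hi : i < 2 ^ j)
    (ht : t ∉ haarSupport 𝓑 j i) : b j i t = 0 := by
  rw [H.eq_sum j hj i hi]
  refine Finset.sum_eq_zero fun p hp => ?_
  rw [haarF_eq_zero_of_notMem fun h => ht (Set.mem_biUnion hp h), mul_zero]

lemma b_eq_of_mem_dyadicI (H : FaithfulHaarSystem n 𝓑 θ b) (hj : j ≤ n) (hi : i < 2 ^ j)
    {p : ℕ × ℕ} (hp : p ∈ 𝓑 j i) (ht : t ∈ dyadicI p.1 p.2) :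
    b j i t = θ p * haarF p.1 p.2 t := by
  rw [H.eq_sum j hj i hi]
  refine Finset.sum_eq_single_of_mem p hp fun q hq hqp => ?_
  have htq := (H.disjoint_of_ne j hj i hi p hp q hq hqp.symm).notMem_of_mem_left ht
  rw [haarF_eq_zero_of_notMem htq, mul_zero]

lemma haarF_eq_indicator (H : FaithfulHaarSystem n 𝓑 θ b) (hj : j ≤ n) (hi : i < 2 ^ j)
    {p : ℕ × ℕ} (hp : p ∈ 𝓑 j i) :
    haarF p.1 p.2 = (dyadicI p.1 p.2).indicator fun t => θ p * b j i t := by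
  ext t
  by_cases ht : t ∈ dyadicI p.1 p.2
  · rw [Set.indicator_of_mem ht, H.b_eq_of_mem_dyadicI hj hi hp ht, ← mul_assoc,
      H.sign_mul_self, one_mul]
  · rw [Set.indicator_of_notMem ht, haarF_eq_zero_of_notMem ht]

lemma b_eq_one_or_neg_one (H : FaithfulHaarSystem n 𝓑 θ b) (hj : j ≤ n) (hi : i < 2 ^ j)
    (ht : t ∈ haarSupport 𝓑 j i) : b j i t = 1 ∨ b j i t = -1 := by
  obtain ⟨p, hp, htp⟩ := Set.mem_iUnion₂.1 ht
  rw [H.b_eq_of_mem_dyadicI hj hi hp htp]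
  rcases H.sign_eq p with h | h <;> rcases haarF_eq_one_or_neg_one_of_mem htp with h' | h' <;>
    simp [h, h']

lemma setOf_b_eq_subset (H : FaithfulHaarSystem n 𝓑 θ b) (hj : j ≤ n) (hi : i < 2 ^ j)
    {ε : ℝ} (hε : ε ≠ 0) : {t | b j i t = ε} ⊆ haarSupport 𝓑 j i := fun t ht => by
  by_contra h
  exact hε (ht.symm.trans (H.b_eq_zero_of_notMem hj hi h))

lemma setOf_b_eq (H : FaithfulHaarSystem n 𝓑 θ b) (hj : j ≤ n) (hi : i < 2 ^ j)
    {ε : ℝ} (hε : ε ≠ 0) :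
    {t | b j i t = ε} = ⋃ p ∈ 𝓑 j i, {t | haarF p.1 p.2 t = θ p * ε} := by
  ext t
  simp only [Set.mem_ofPred_eq, Set.mem_iUnion, exists_prop]
  constructor
  · intro ht
    obtain ⟨p, hp, htp⟩ := Set.mem_iUnion₂.1 (H.setOf_b_eq_subset hj hi hε ht)
    refine ⟨p, hp, ?_⟩
    rw [← ht, H.b_eq_of_mem_dyadicI hj hi hp htp, ← mul_assoc, H.sign_mul_self, one_mul]
  · rintro ⟨p, hp, htp⟩
    have hmem : t ∈ dyadicI p.1 p.2 := by
      by_contra h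
      rw [haarF_eq_zero_of_notMem h] at htp
      exact mul_ne_zero (left_ne_zero_of_mul_eq_one (H.sign_mul_self p)) hε htp.symm
    rw [H.b_eq_of_mem_dyadicI hj hi hp hmem, htp, ← mul_assoc, H.sign_mul_self, one_mul]

lemma measurable_b (H : FaithfulHaarSystem n 𝓑 θ b) (hj : j ≤ n) (hi : i < 2 ^ j) :
    Measurable (b j i) := by
  rw [H.eq_sum j hj i hi]
  exact Finset.measurable_sum _ fun p _ => (measurable_haarF p.1 p.2).const_mul _

lemma integrable_b (H : FaithfulHaarSystem n 𝓑 θ b) (hj : j ≤ n) (hi : i < 2 ^ j) :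
    Integrable (b j i) := by
  rw [H.eq_sum j hj i hi]
  exact integrable_finsetSum _ fun p _ => (integrable_haarF p.1 p.2).const_mul _

lemma haarSupport_succ_eq (H : FaithfulHaarSystem n 𝓑 θ b) (hj : j < n) {c : ℕ}
    (hc : c < 2 ^ (j + 1)) : haarSupport 𝓑 (j + 1) c = {t | b j (c / 2) t = childSign c} := by
  have h := H.haarSupport_succ j hj (c / 2) (by omega)
  rcases Nat.mod_two_eq_zero_or_one c with hc2 | hc2
  · rw [childSign, if_pos hc2, ← h.1, Nat.mul_div_cancel' (Nat.dvd_of_mod_eq_zero hc2)]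
  · rw [childSign, if_neg (by omega), ← h.2]
    congr 1
    omega

lemma levelSet_eq_haarSupport (H : FaithfulHaarSystem n 𝓑 θ b) (hj : j ≤ n) (hi : i < 2 ^ j) :
    levelSet b j i = haarSupport 𝓑 j i := by
  induction j generalizing i with
  | zero =>
    obtain rfl : i = 0 := by simpa using hi
    exact H.haarSupport_zero.symm
  | succ j ih =>
    have hi2 : i / 2 < 2 ^ j := by omega
    rw [levelSet_succ, ih (by omega) hi2, H.haarSupport_succ_eq (by omega) hi,
      Set.inter_eq_right.2 (H.setOf_b_eq_subset (by omega) hi2 _)]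
    rcases childSign_eq_one_or_neg_one i with h | h <;> simp [h]

lemma levelSet_succ_eq (H : FaithfulHaarSystem n 𝓑 θ b) (hj : j ≤ n) {c : ℕ}
    (hc : c < 2 ^ (j + 1)) : levelSet b (j + 1) c = {t | b j (c / 2) t = childSign c} := by
  have hc2 : c / 2 < 2 ^ j := by omega
  rw [levelSet_succ, H.levelSet_eq_haarSupport hj hc2,
    Set.inter_eq_right.2 (H.setOf_b_eq_subset hj hc2 _)]
  rcases childSign_eq_one_or_neg_one c with h | h <;> simp [h]

lemma measurableSet_levelSet (H : FaithfulHaarSystem n 𝓑 θ b) (hj : j ≤ n + 1)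
    (hi : i < 2 ^ j) : MeasurableSet (levelSet b j i) := by
  induction j generalizing i with
  | zero => exact measurableSet_Ico
  | succ j ih =>
    exact (ih (by omega) (by omega)).inter
      (H.measurable_b (by omega) (by omega) (measurableSet_singleton _))

lemma exists_mem_levelSet (H : FaithfulHaarSystem n 𝓑 θ b) (hj : j ≤ n + 1)
    (ht : t ∈ Set.Ico (0 : ℝ) 1) : ∃ c < 2 ^ j, t ∈ levelSet b j c := by
  induction j with
  | zero => exact ⟨0, by simp, ht⟩
  | succ j ih =>
    obtain ⟨c, hc, htc⟩ := ih (by omega)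
    have hb := H.b_eq_one_or_neg_one (by omega) hc (H.levelSet_eq_haarSupport (by omega) hc ▸ htc)
    rcases hb with hb | hb
    · refine ⟨2 * c, by omega, ?_⟩
      simp [levelSet_succ, childSign, htc, hb]
    · refine ⟨2 * c + 1, by omega, ?_⟩
      have hc2 : (2 * c + 1) / 2 = c := by omega
      simp [levelSet_succ, childSign, hc2, htc, hb]

lemma pairwiseDisjoint_of_subset_dyadicI (H : FaithfulHaarSystem n 𝓑 θ b) (hj : j ≤ n)
    (hi : i < 2 ^ j) {f : ℕ × ℕ → Set ℝ} (hf : ∀ p, f p ⊆ dyadicI p.1 p.2) :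
    (𝓑 j i : Set (ℕ × ℕ)).PairwiseDisjoint f :=
  fun p hp q hq hpq => (H.disjoint_of_ne j hj i hi p hp q hq hpq).mono (hf p) (hf q)

lemma volume_setOf_b_eq_inter (H : FaithfulHaarSystem n 𝓑 θ b) (hj : j ≤ n) (hi : i < 2 ^ j)
    {ε : ℝ} (hε : ε = 1 ∨ ε = -1) {A : Set ℝ} (hA : MeasurableSet A)
    (hpA : ∀ p ∈ 𝓑 j i, dyadicI p.1 p.2 ⊆ A ∨ Disjoint (dyadicI p.1 p.2) A) :
    volume ({t | b j i t = ε} ∩ A) = 2⁻¹ * volume (haarSupport 𝓑 j i ∩ A) := by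
  have hlevel : ∀ p, {t | haarF p.1 p.2 t = θ p * ε} ⊆ dyadicI p.1 p.2 := fun p t ht => by
    by_contra h
    rw [Set.mem_ofPred_eq, haarF_eq_zero_of_notMem h] at ht
    exact mul_ne_zero (left_ne_zero_of_mul_eq_one (H.sign_mul_self p))
      (by rcases hε with rfl | rfl <;> norm_num) ht.symm
  rw [H.setOf_b_eq hj hi (by rcases hε with rfl | rfl <;> norm_num), haarSupport,
    Set.iUnion₂_inter, Set.iUnion₂_inter,
    measure_biUnion_finset
      (H.pairwiseDisjoint_of_subset_dyadicI hj hi fun p => Set.inter_subset_left.trans (hlevel p))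
      fun p _ => ((measurable_haarF _ _) (measurableSet_singleton _)).inter hA,
    measure_biUnion_finset
      (H.pairwiseDisjoint_of_subset_dyadicI hj hi fun p => Set.inter_subset_left)
      fun p _ => (measurableSet_dyadicI _ _).inter hA, Finset.mul_sum]
  refine Finset.sum_congr rfl fun p hp => ?_
  rcases hpA p hp with hsub | hdisj
  · have hθε : θ p * ε = 1 ∨ θ p * ε = -1 := by
      rcases H.sign_eq p with h | h <;> rcases hε with rfl | rfl <;> simp [h]
    rw [Set.inter_eq_left.2 ((hlevel p).trans hsub), Set.inter_eq_left.2 hsub,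
      volume_setOf_haarF_eq hθε]
  · rw [(hdisj.mono_left (hlevel p)).inter_eq, hdisj.inter_eq, measure_empty, mul_zero]

lemma volume_levelSet (H : FaithfulHaarSystem n 𝓑 θ b) (hj : j ≤ n + 1) (hi : i < 2 ^ j) :
    volume (levelSet b j i) = 2⁻¹ ^ j := by
  induction j generalizing i with
  | zero => simp [levelSet]
  | succ j ih =>
    have hi2 : i / 2 < 2 ^ j := by omega
    have h := H.volume_setOf_b_eq_inter (by omega) hi2 (childSign_eq_one_or_neg_one i)
      MeasurableSet.univ fun p _ => Or.inl (Set.subset_univ _)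
    rw [Set.inter_univ, Set.inter_univ, ← H.levelSet_succ_eq (by omega) hi,
      ← H.levelSet_eq_haarSupport (by omega) hi2, ih (by omega) hi2] at h
    rw [h, pow_succ']

lemma subset_or_disjoint_of_volume_levelSet_inter (H : FaithfulHaarSystem n 𝓑 θ b) {j₀ i₀ : ℕ}
    (hj₀ : j₀ ≤ n) (hi₀ : i₀ < 2 ^ j₀) {K : ℕ × ℕ} (hK : K ∈ 𝓑 j₀ i₀) {k c : ℕ}
    (hk : j₀ + k ≤ n) (hc : c < 2 ^ (j₀ + k)) (hci : c / 2 ^ k = i₀)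
    (hvol : volume (levelSet b (j₀ + k) c ∩ dyadicI K.1 K.2) = 2⁻¹ ^ k * volume (dyadicI K.1 K.2))
    {p : ℕ × ℕ} (hp : p ∈ 𝓑 (j₀ + k) c) :
    dyadicI p.1 p.2 ⊆ dyadicI K.1 K.2 ∨ Disjoint (dyadicI p.1 p.2) (dyadicI K.1 K.2) := by
  by_cases hd : Disjoint (dyadicI p.1 p.2) (dyadicI K.1 K.2)
  · exact Or.inr hd
  refine Or.inl ((dyadicI_subset_or_subset_of_not_disjoint hd).elim id fun hKp => ?_)
  -- `K ⊆ p` forces `k = 0` by measure, and then `p = K` by disjointness within `𝓑_{J₀}`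
  have hKΓ : dyadicI K.1 K.2 ⊆ levelSet b (j₀ + k) c := by
    rw [H.levelSet_eq_haarSupport hk hc]
    exact hKp.trans (Set.subset_biUnion_of_mem (u := fun p => dyadicI p.1 p.2) hp)
  rw [Set.inter_eq_right.2 hKΓ] at hvol
  obtain rfl : k = 0 := pow_right_injective₀ two_pos (by norm_num : (2 : ℝ) ≠ 1) <| by
    simpa [volume_dyadicI] using congrArg ENNReal.toReal hvol
  rw [pow_zero, Nat.div_one] at hci
  subst hci
  obtain rfl : p = K := by
    by_contra hne
    exact hd (H.disjoint_of_ne j₀ hj₀ _ hi₀ p hp K hK hne)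
  exact subset_rfl

lemma volume_levelSet_inter (H : FaithfulHaarSystem n 𝓑 θ b) {j₀ i₀ : ℕ} (hj₀ : j₀ ≤ n)
    (hi₀ : i₀ < 2 ^ j₀) {K : ℕ × ℕ} (hK : K ∈ 𝓑 j₀ i₀) {k c : ℕ} (hk : j₀ + k ≤ n + 1)
    (hc : c < 2 ^ (j₀ + k)) (hci : c / 2 ^ k = i₀) :
    volume (levelSet b (j₀ + k) c ∩ dyadicI K.1 K.2) = 2⁻¹ ^ k * volume (dyadicI K.1 K.2) := by
  induction k generalizing c with
  | zero =>
    rw [pow_zero, Nat.div_one] at hci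
    subst hci
    have hK_sub : dyadicI K.1 K.2 ⊆ haarSupport 𝓑 j₀ c :=
      Set.subset_biUnion_of_mem (u := fun p => dyadicI p.1 p.2) hK
    rw [add_zero, H.levelSet_eq_haarSupport hj₀ hc, Set.inter_eq_right.2 hK_sub, pow_zero,
      one_mul]
  | succ k ih =>
    have hc2 : c / 2 < 2 ^ (j₀ + k) := by rw [← add_assoc, pow_succ] at hc; omega
    have hc2i : c / 2 / 2 ^ k = i₀ := by rwa [Nat.div_div_eq_div_mul, ← pow_succ']
    have hIH := ih (by omega) hc2 hc2i
    rw [← add_assoc, H.levelSet_succ_eq (by omega) (by rwa [add_assoc]),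
      H.volume_setOf_b_eq_inter (by omega) hc2 (childSign_eq_one_or_neg_one c)
        (measurableSet_dyadicI _ _) fun p hp =>
          H.subset_or_disjoint_of_volume_levelSet_inter hj₀ hi₀ hK (by omega) hc2 hc2i hIH hp,
      ← H.levelSet_eq_haarSupport (by omega) hc2, hIH, pow_succ', mul_assoc]

lemma b_eq_zero_on_levelSet (H : FaithfulHaarSystem n 𝓑 θ b) (hj : j ≤ n) (hi : i < 2 ^ j)
    {k c : ℕ} (hc : c < 2 ^ (j + k)) (hci : c / 2 ^ k ≠ i) (ht : t ∈ levelSet b (j + k) c) :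
    b j i t = 0 := by
  have hc' : c / 2 ^ k < 2 ^ j := Nat.div_lt_of_lt_mul (by rwa [← pow_add, add_comm])
  refine H.b_eq_zero_of_notMem hj hi fun h => ?_
  rw [← H.levelSet_eq_haarSupport hj hi] at h
  exact (disjoint_levelSet b hc' hi hci).notMem_of_mem_left (levelSet_add_subset b j k c ht) h

lemma exists_b_eq_on_levelSet (H : FaithfulHaarSystem n 𝓑 θ b) (hj : j ≤ n) (hi : i < 2 ^ j)
    {c : ℕ} (hc : c < 2 ^ (n + 1)) : ∃ v, ∀ t ∈ levelSet b (n + 1) c, b j i t = v := by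
  obtain ⟨k, rfl⟩ := Nat.exists_eq_add_of_le hj
  by_cases hci : c / 2 ^ (k + 1) = i
  · exact ⟨childSign (c / 2 ^ k), fun t ht => hci ▸ levelSet_add_succ_subset b j k c ht⟩
  · exact ⟨0, fun t ht => H.b_eq_zero_on_levelSet hj hi (k := k + 1) hc hci ht⟩

lemma setIntegral_levelSet_haarF (H : FaithfulHaarSystem n 𝓑 θ b) {j₀ i₀ : ℕ} (hj₀ : j₀ ≤ n)
    (hi₀ : i₀ < 2 ^ j₀) {K : ℕ × ℕ} (hK : K ∈ 𝓑 j₀ i₀) {c : ℕ} (hc : c < 2 ^ (n + 1)) :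
    ∫ t in levelSet b (n + 1) c, haarF K.1 K.2 t =
      ∫ t in levelSet b (n + 1) c, θ K * ((2 : ℝ) ^ j₀ / 2 ^ K.1) * b j₀ i₀ t := by
  have hΓ := H.measurableSet_levelSet le_rfl hc
  rw [H.haarF_eq_indicator hj₀ hi₀ hK, setIntegral_indicator (measurableSet_dyadicI _ _)]
  obtain ⟨k, rfl⟩ := Nat.exists_eq_add_of_le hj₀
  by_cases hci : c / 2 ^ (k + 1) = i₀
  · have hb : ∀ t ∈ levelSet b (j₀ + k + 1) c, b j₀ i₀ t = childSign (c / 2 ^ k) :=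
      fun t ht => hci ▸ levelSet_add_succ_subset b j₀ k c ht
    have hvol := H.volume_levelSet_inter hj₀ hi₀ hK (k := k + 1) le_rfl hc hci
    rw [← add_assoc] at hvol
    rw [setIntegral_congr_fun (hΓ.inter (measurableSet_dyadicI _ _)) fun t ht => by
        rw [hb t ht.1], setIntegral_congr_fun hΓ fun t ht => by rw [hb t ht],
      setIntegral_const, setIntegral_const, measureReal_def, measureReal_def, hvol,
      H.volume_levelSet le_rfl hc, volume_dyadicI]
    simp only [ENNReal.toReal_mul, ENNReal.toReal_pow, ENNReal.toReal_inv, ENNReal.toReal_ofNat,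
      smul_eq_mul, pow_add, pow_one, inv_pow]
    field_simp
  · have hb : ∀ t ∈ levelSet b (j₀ + k + 1) c, b j₀ i₀ t = 0 :=
      fun t ht => H.b_eq_zero_on_levelSet hj₀ hi₀ (k := k + 1) hc hci ht
    rw [setIntegral_congr_fun (hΓ.inter (measurableSet_dyadicI _ _)) fun t ht => by
        rw [hb t ht.1], setIntegral_congr_fun hΓ fun t ht => by rw [hb t ht]]
    simp

lemma ae_eq_condExp_of_setIntegral_levelSet_eq (H : FaithfulHaarSystem n 𝓑 θ b) {f g : ℝ → ℝ}
    (hf : Integrable f) (hg : Integrable g) (hgm : StronglyMeasurable[haarSystemSigma b n] g)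
    (hfg : ∀ c < 2 ^ (n + 1), ∫ t in levelSet b (n + 1) c, g t = ∫ t in levelSet b (n + 1) c, f t) :
    g =ᵐ[volume.restrict (Set.Ico 0 1)]
      (volume.restrict (Set.Ico 0 1))[f | haarSystemSigma b n] := by
  let Γ : Fin (2 ^ (n + 1)) → Set ℝ := fun c => levelSet b (n + 1) c
  have hΓ : ∀ c, MeasurableSet (Γ c) := fun c => H.measurableSet_levelSet le_rfl c.2
  refine ae_eq_condExp_of_forall_setIntegral_atom_eq
    (haarSystemSigma_le fun j hj i hi => (H.measurable_b hj hi).comap_le)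
    (haarSystemSigma_le fun j hj i hi => comap_le_saturatedMeasurableSpace fun c =>
      H.exists_b_eq_on_levelSet hj hi c.2)
    hΓ (fun c c' hcc' => disjoint_levelSet b c.2 c'.2 (Fin.val_injective.ne hcc'))
    (ae_restrict_of_forall_mem measurableSet_Ico fun t ht =>
      let ⟨c, hc, htc⟩ := H.exists_mem_levelSet le_rfl ht; ⟨⟨c, hc⟩, htc⟩)
    hf.restrict hg.restrict hgm fun c => ?_
  rw [Measure.restrict_restrict (hΓ c), Set.inter_eq_left.2 (levelSet_subset_Ico b _ _),
    hfg c c.2]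

end FaithfulHaarSystem

theorem condexp_haar_onto_faithful_system_general
    (n : ℕ) (𝓑 : ℕ → ℕ → Finset (ℕ × ℕ)) (θ : ℕ × ℕ → ℝ)
    (b : ℕ → ℕ → ℝ → ℝ)
    (hθ : ∀ p, θ p = 1 ∨ θ p = -1)
    (hdisjoint_within : ∀ j ≤ n, ∀ i < 2 ^ j, ∀ p ∈ 𝓑 j i, ∀ q ∈ 𝓑 j i, p ≠ q →
      Disjoint (dyadicI p.1 p.2) (dyadicI q.1 q.2))
    (hdef : ∀ j ≤ n, ∀ i < 2 ^ j,
      b j i = fun t => ∑ p ∈ 𝓑 j i, θ p * haarF p.1 p.2 t)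
    (hroot : (⋃ p ∈ 𝓑 0 0, dyadicI p.1 p.2) = Set.Ico (0 : ℝ) 1)
    (hfaithful : ∀ j < n, ∀ i < 2 ^ j,
      ((⋃ p ∈ 𝓑 (j + 1) (2 * i), dyadicI p.1 p.2) = {t | b j i t = 1}) ∧
      ((⋃ p ∈ 𝓑 (j + 1) (2 * i + 1), dyadicI p.1 p.2) = {t | b j i t = -1}))
    (μ : Measure ℝ) (hμ : μ = volume.restrict (Set.Ico (0 : ℝ) 1))
    (ℱ : MeasurableSpace ℝ)
    (hℱ : ℱ = ⨆ j ∈ Finset.range (n + 1), ⨆ i ∈ Finset.range (2 ^ j),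
      MeasurableSpace.comap (b j i) Real.measurableSpace)
    (km m : ℕ) :
    (∀ j₀ ≤ n, ∀ i₀ < 2 ^ j₀, (km, m) ∈ 𝓑 j₀ i₀ →
      μ[haarF km m | ℱ] =ᵐ[μ]
        fun t => θ (km, m) * ((2 : ℝ) ^ j₀ / 2 ^ km) * b j₀ i₀ t) ∧
    ((∀ j ≤ n, ∀ i < 2 ^ j, (km, m) ∉ 𝓑 j i) →
      (∀ i < 2 ^ (n + 1), ∫ t in levelSet b (n + 1) i, haarF km m t = 0) →
      μ[haarF km m | ℱ] =ᵐ[μ] 0) := by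
  have H : FaithfulHaarSystem n 𝓑 θ b := ⟨hθ, hdisjoint_within, hdef, hroot, hfaithful⟩
  subst hμ hℱ
  refine ⟨fun j₀ hj₀ i₀ hi₀ hK => ?_, fun _ hint => ?_⟩
  · exact (H.ae_eq_condExp_of_setIntegral_levelSet_eq (integrable_haarF km m)
      ((H.integrable_b hj₀ hi₀).const_mul _)
      ((measurable_b_haarSystemSigma hj₀ hi₀).const_mul _).stronglyMeasurable
      fun c hc => (H.setIntegral_levelSet_haarF hj₀ hi₀ hK hc).symm).symm
  · exact (H.ae_eq_condExp_of_setIntegral_levelSet_eq (integrable_haarF km m)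
      (integrable_zero _ _ _) stronglyMeasurable_zero fun c hc => by simp [hint c hc]).symm

/-- Conditional expectation of a Haar function `h_K` onto `ℱ = σ({b_J : J ∈ 𝒟_{≤ n}})`
for a finite faithful Haar system `(b_J)`: if `K ∈ 𝓑_{J₀}`, then
`𝔼^ℱ h_K = θ_K (|K|/|J₀|) b_{J₀}` a.e.; and if `K` belongs to no `𝓑_J` and
`⟨χ_{Γ_I}, h_K⟩ = 0` for all atoms `Γ_I` of `ℱ`, then `𝔼^ℱ h_K = 0` a.e. -/
theorem condexp_haar_onto_faithful_system
    (n : ℕ) (𝓑 : ℕ → ℕ → Finset (ℕ × ℕ)) (θ : ℕ × ℕ → ℝ)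
    (b : ℕ → ℕ → ℝ → ℝ)
    (hθ : ∀ p, θ p = 1 ∨ θ p = -1)
    (hvalid : ∀ j ≤ n, ∀ i < 2 ^ j, ∀ p ∈ 𝓑 j i, p.2 < 2 ^ p.1)
    (hdisjoint_within : ∀ j ≤ n, ∀ i < 2 ^ j, ∀ p ∈ 𝓑 j i, ∀ q ∈ 𝓑 j i, p ≠ q →
      Disjoint (dyadicI p.1 p.2) (dyadicI q.1 q.2))
    (hdisjoint_between : ∀ j ≤ n, ∀ i < 2 ^ j, ∀ j' ≤ n, ∀ i' < 2 ^ j',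
      (j, i) ≠ (j', i') → 𝓑 j i ∩ 𝓑 j' i' = ∅)
    (hdef : ∀ j ≤ n, ∀ i < 2 ^ j,
      b j i = fun t => ∑ p ∈ 𝓑 j i, θ p * haarF p.1 p.2 t)
    (hroot : (⋃ p ∈ 𝓑 0 0, dyadicI p.1 p.2) = Set.Ico (0 : ℝ) 1)
    (hfaithful : ∀ j < n, ∀ i < 2 ^ j,
      ((⋃ p ∈ 𝓑 (j + 1) (2 * i), dyadicI p.1 p.2) = {t | b j i t = 1}) ∧
      ((⋃ p ∈ 𝓑 (j + 1) (2 * i + 1), dyadicI p.1 p.2) = {t | b j i t = -1}))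
    (μ : Measure ℝ) (hμ : μ = volume.restrict (Set.Ico (0 : ℝ) 1))
    (ℱ : MeasurableSpace ℝ)
    (hℱ : ℱ = ⨆ j ∈ Finset.range (n + 1), ⨆ i ∈ Finset.range (2 ^ j),
      MeasurableSpace.comap (b j i) Real.measurableSpace)
    (km m : ℕ) (hm : m < 2 ^ km) :
    (∀ j₀ ≤ n, ∀ i₀ < 2 ^ j₀, (km, m) ∈ 𝓑 j₀ i₀ →
      μ[haarF km m | ℱ] =ᵐ[μ]
        fun t => θ (km, m) * ((2 : ℝ) ^ j₀ / 2 ^ km) * b j₀ i₀ t) ∧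
    ((∀ j ≤ n, ∀ i < 2 ^ j, (km, m) ∉ 𝓑 j i) →
      (∀ i < 2 ^ (n + 1), ∫ t in levelSet b (n + 1) i, haarF km m t = 0) →
      μ[haarF km m | ℱ] =ᵐ[μ] 0) :=
  condexp_haar_onto_faithful_system_general n 𝓑 θ b hθ hdisjoint_within hdef hroot hfaithful μ hμ ℱ
    hℱ km m
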